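/- arXiv:1304.1221 — 4 statements merged into one kernel-verified Lean document; each statement's English description precedes it below -/
import Mathlib

section
/- Let A_s be the s×s real tridiagonal matrix with diagonal entries all equal to b except the (1,1) entry which is b-α, with all superdiagonal entries equal to c and all subdiagonal entries equal to a. If |α| = √(ac) ≠ 0, then the spectrum of A_s is { b + 2α·cos(2jπ/(2s+1)) : j = 1, …, s }. -/
/-- The `s×s` tridiagonal matrix with diagonal entries `b` except the `(1,1)` entry which is
`b - α`, superdiagonal entries `c` and subdiagonal entries `a`. -/
def tridiagA (s : ℕ) (a b c α : ℝ) : Matrix (Fin s) (Fin s) ℝ :=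
  Matrix.of fun i j =>
    if i = j then (if (i : ℕ) = 0 then b - α else b)
    else if (i : ℕ) + 1 = (j : ℕ) then c
    else if (j : ℕ) + 1 = (i : ℕ) then a
    else 0

/-! The eigenvectors are explicit. With `β = α / c` and `φ = jπ/(2s+1)`, the sequence
`u k = β^k sin((2k+1)φ)` satisfies `a u(k-1) + b u k + c u(k+1) = (b + 2α cos 2φ) u k` for every
integer `k`: this is `sin(x - 2φ) + sin(x + 2φ) = 2 sin x cos 2φ`, since `a = αβ` and `cβ = α`.
The first row of `A_s` is this recurrence with the ghost term `a u(-1) = -α u 0`, and the last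
row is the recurrence because `u s = sin(jπ) = 0`. For `j = 1, …, s` the angles `2φ` lie in
`(0, π)`, so these `s` eigenvalues are distinct and exhaust the roots of the degree-`s`
characteristic polynomial. -/

open Matrix

lemma tridiagA_mulVec_apply {s : ℕ} (a b c α : ℝ) (u : ℤ → ℝ) (hs : u s = 0)
    (h0 : a * u (-1) = -α * u 0) (i : Fin s) :
    (tridiagA s a b c α *ᵥ fun k => u k) i = a * u (i - 1) + b * u i + c * u (i + 1) := by
  let row (k : ℕ) : ℝ := (if k = i then (if (i : ℕ) = 0 then b - α else b) * u k else 0) +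
    (if k = i + 1 then c * u k else 0) + (if k + 1 = i then a * u k else 0)
  have hrow (k : Fin s) : tridiagA s a b c α i k * u k = row k := by
    simp only [row, tridiagA, of_apply, Fin.ext_iff]
    split_ifs <;> first | omega | ring
  have hsuper : (if (i : ℕ) + 1 < s then c * u ((i + 1 : ℕ) : ℤ) else 0) = c * u (i + 1) := by
    rcases (Nat.succ_le_of_lt i.isLt).lt_or_eq with h | h
    · simp [h]
    · have h' : ((i : ℕ) : ℤ) + 1 = s := by omega
      simp [h', hs]
  have hsub : ∑ k ∈ Finset.range s, (if k + 1 = i then a * u k else 0) =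
      if (i : ℕ) = 0 then 0 else a * u (i - 1) := by
    obtain ⟨_ | m, hi⟩ := i
    · simp
    · simp [show m < s by omega]
  simp only [mulVec, dotProduct, hrow, Fin.sum_univ_eq_sum_range row s]
  simp only [row, Finset.sum_add_distrib, Finset.sum_ite_eq', Finset.mem_range, i.isLt, if_true,
    hsuper, hsub]
  split_ifs with hi
  · rw [hi, Nat.cast_zero, zero_sub]
    linear_combination -h0
  · ring

lemma Matrix.isRoot_charpoly_of_mulVec_eq_smul {n R : Type*} [Fintype n] [DecidableEq n]
    [CommRing R] [IsDomain R] (A : Matrix n n R) {v : n → R} {μ : R} (hv : v ≠ 0)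
    (h : A *ᵥ v = μ • v) : A.charpoly.IsRoot μ := by
  rw [← Matrix.charpoly_toLin', ← Module.End.hasEigenvalue_iff_isRoot_charpoly]
  exact Module.End.hasEigenvalue_of_hasEigenvector
    ⟨Module.End.mem_eigenspace_iff.mpr (by simpa using h), hv⟩

lemma isRoot_charpoly_tridiagA_of_recurrence {s : ℕ} (hs : 0 < s) (a b c α μ : ℝ) (u : ℤ → ℝ)
    (hrec : ∀ k, a * u (k - 1) + b * u k + c * u (k + 1) = μ * u k)
    (h0 : a * u (-1) = -α * u 0) (hu0 : u 0 ≠ 0) (hus : u s = 0) :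
    (tridiagA s a b c α).charpoly.IsRoot μ := by
  refine (tridiagA s a b c α).isRoot_charpoly_of_mulVec_eq_smul (v := fun k => u k) ?_ ?_
  · exact fun hv => hu0 (by simpa using congrFun hv ⟨0, hs⟩)
  · ext i
    rw [tridiagA_mulVec_apply a b c α u hus h0, hrec]
    rfl

noncomputable def sineSeq (β φ : ℝ) (k : ℤ) : ℝ := β ^ k * Real.sin ((2 * k + 1) * φ)

lemma sineSeq_recurrence {a c α β : ℝ} (hβ : β ≠ 0) (φ : ℝ) (ha : a = α * β) (hc : c * β = α)
    (b : ℝ) (k : ℤ) :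
    a * sineSeq β φ (k - 1) + b * sineSeq β φ k + c * sineSeq β φ (k + 1) =
      (b + 2 * α * Real.cos (2 * φ)) * sineSeq β φ k := by
  set x := (2 * k + 1) * φ
  have hsin : Real.sin (x - 2 * φ) + Real.sin (x + 2 * φ) = 2 * Real.sin x * Real.cos (2 * φ) := by
    rw [Real.sin_sub, Real.sin_add]; ring
  simp only [sineSeq, zpow_sub_one₀ hβ, zpow_add_one₀ hβ]
  rw [show (2 * ((k - 1 : ℤ) : ℝ) + 1) * φ = x - 2 * φ by push_cast; ring,
    show (2 * ((k + 1 : ℤ) : ℝ) + 1) * φ = x + 2 * φ by push_cast; ring]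
  linear_combination (α * β ^ k) * hsin + (β ^ k * β⁻¹ * Real.sin (x - 2 * φ)) * ha +
    (β ^ k * Real.sin (x + 2 * φ)) * hc + (α * β ^ k * Real.sin (x - 2 * φ)) * mul_inv_cancel₀ hβ

lemma mul_sineSeq_neg_one {a α β : ℝ} (hβ : β ≠ 0) (φ : ℝ) (ha : a = α * β) :
    a * sineSeq β φ (-1) = -α * sineSeq β φ 0 := by
  norm_num [sineSeq, ha, mul_assoc, hβ]

lemma sineSeq_mul_pi_div_eq_zero (β : ℝ) (s j : ℕ) :
    sineSeq β (j * Real.pi / (2 * s + 1)) s = 0 := by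
  have hφ : (2 * (s : ℝ) + 1) * (j * Real.pi / (2 * s + 1)) = j * Real.pi := by
    field_simp
  simp only [sineSeq, Int.cast_natCast, hφ, Real.sin_nat_mul_pi, mul_zero]

lemma injOn_cos_two_mul_pi_div (s : ℕ) :
    Set.InjOn (fun j : ℕ => Real.cos (2 * j * Real.pi / (2 * s + 1))) (Set.Iic s) := by
  have hmem {j : ℕ} (hj : j ≤ s) : 2 * j * Real.pi / (2 * s + 1) ∈ Set.Icc 0 Real.pi := by
    refine ⟨by positivity, (div_le_iff₀ (by positivity)).mpr ?_⟩
    have : (j : ℝ) ≤ s := by exact_mod_cast hj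
    nlinarith [Real.pi_pos]
  intro i hi j hj h
  have := Real.injOn_cos (hmem hi) (hmem hj) h
  field_simp at this
  exact_mod_cast this

lemma isRoot_charpoly_tridiagA {s j : ℕ} (hj : j ∈ Finset.Icc 1 s) {a c α : ℝ} (b : ℝ)
    (hc : c ≠ 0) (hac : a * c = α ^ 2) (hα : α ≠ 0) :
    (tridiagA s a b c α).charpoly.IsRoot
      (b + 2 * α * Real.cos (2 * j * Real.pi / (2 * s + 1))) := by
  obtain ⟨hj1, hjs⟩ := Finset.mem_Icc.mp hj
  set β := α / c
  have hβ : β ≠ 0 := div_ne_zero hα hc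
  have ha : a = α * β := by rw [mul_div_assoc', eq_div_iff hc, hac, sq]
  have hcβ : c * β = α := mul_div_cancel₀ α hc
  set φ := j * Real.pi / (2 * s + 1)
  have hφ : 0 < φ ∧ φ < Real.pi := by
    refine ⟨by positivity, (div_lt_iff₀ (by positivity)).mpr ?_⟩
    have : (j : ℝ) ≤ s := by exact_mod_cast hjs
    nlinarith [Real.pi_pos]
  rw [show 2 * (j : ℝ) * Real.pi / (2 * s + 1) = 2 * φ by ring]
  refine isRoot_charpoly_tridiagA_of_recurrence (by omega) a b c α _ (sineSeq β φ)
    (sineSeq_recurrence hβ φ ha hcβ b) (mul_sineSeq_neg_one hβ φ ha) ?_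
    (sineSeq_mul_pi_div_eq_zero β s j)
  simpa [sineSeq] using (Real.sin_pos_of_pos_of_lt_pi hφ.1 hφ.2).ne'

theorem spectrum_tridiagA_general (s : ℕ) (a b c α : ℝ)
    (hac : a * c = α ^ 2) (hα : α ≠ 0) :
    (tridiagA s a b c α).charpoly.roots =
      (Finset.Icc 1 s).val.map
        (fun j : ℕ => b + 2 * α * Real.cos (2 * (j : ℝ) * Real.pi / (2 * (s : ℝ) + 1))) := by
  have hc : c ≠ 0 := right_ne_zero_of_mul (hac ▸ pow_ne_zero 2 hα)
  have hinj : Set.InjOn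
      (fun j : ℕ => b + 2 * α * Real.cos (2 * (j : ℝ) * Real.pi / (2 * (s : ℝ) + 1)))
      (Finset.Icc 1 s) := fun i hi j hj h =>
    injOn_cos_two_mul_pi_div s (Finset.mem_Icc.mp hi).2 (Finset.mem_Icc.mp hj).2
      (mul_left_cancel₀ (mul_ne_zero two_ne_zero hα) (add_left_cancel h))
  rw [← Finset.image_val_of_injOn hinj]
  refine Polynomial.roots_eq_of_natDegree_le_card_of_ne_zero ?_ ?_ (charpoly_monic _).ne_zero
  · simp only [Finset.mem_image]
    rintro _ ⟨j, hj, rfl⟩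
    exact isRoot_charpoly_tridiagA hj b hc hac hα
  · simp [Finset.card_image_of_injOn hinj, charpoly_natDegree_eq_dim]

/-- If `|α| = √(ac) ≠ 0` (with `a, c > 0`, `ac = α²`), then the spectrum of `A_s` is
`{ b + 2α cos(2jπ/(2s+1)) : j = 1,…,s }`. -/
theorem spectrum_tridiagA (s : ℕ) (hs : 0 < s) (a b c α : ℝ) (ha : 0 < a) (hc : 0 < c)
    (hac : a * c = α ^ 2) (hα : α ≠ 0) :
    (tridiagA s a b c α).charpoly.roots =
      (Finset.Icc 1 s).val.map
        (fun j : ℕ => b + 2 * α * Real.cos (2 * (j : ℝ) * Real.pi / (2 * (s : ℝ) + 1))) :=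
  spectrum_tridiagA_general s a b c α hac hα
end

section
/- Let L and L' be as in the preceding block form, with L' = L + E where E adds 2E_z to each diagonal H-block and -2E_z to the off-diagonal blocks (for z ∈ {0,1}^k). If v is an eigenvector of H + 2E_z with eigenvalue γ, then w = (vᵀ, -vᵀ, 0, 0ᵀ)ᵀ satisfies L'w = γw. Consequently, the multiset of eigenvalues of L' equals (spect(L) \ spect(H)) ∪ spect(H + 2E_z), counting multiplicities. -/
/-- Column vector (as a `Fin k × Unit` matrix). -/
def colVec {k : ℕ} (y : Fin k → ℝ) : Matrix (Fin k) Unit ℝ :=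
  Matrix.of fun i _ => y i

/-- The block matrix `[[H, 0, -y, 0], [0, H, -y, 0], [-yᵀ, -yᵀ, δ, tᵀ], [0, 0, t, B]]`. -/
def blockL (k m : ℕ) (H : Matrix (Fin k) (Fin k) ℝ) (y : Fin k → ℝ) (δ : ℝ)
    (t : Fin m → ℝ) (B : Matrix (Fin m) (Fin m) ℝ) :
    Matrix ((Fin k ⊕ Fin k) ⊕ (Unit ⊕ Fin m)) ((Fin k ⊕ Fin k) ⊕ (Unit ⊕ Fin m)) ℝ :=
  Matrix.fromBlocks
    (Matrix.fromBlocks H 0 0 H)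
    (Matrix.fromBlocks (-(colVec y)) 0 (-(colVec y)) 0)
    (Matrix.fromBlocks (Matrix.transpose (-(colVec y))) (Matrix.transpose (-(colVec y))) 0 0)
    (Matrix.fromBlocks (Matrix.of fun (_ : Unit) (_ : Unit) => δ)
      (Matrix.of fun (_ : Unit) j => t j)
      (Matrix.of fun i (_ : Unit) => t i) B)

/-- The perturbation `[[E_z, -E_z, 0, 0], [-E_z, E_z, 0, 0], [0,0,0,0], [0,0,0,0]]`,
where `E_z = Σ_{i : z_i = 1} e_i e_iᵀ = diagonal z`. -/
def blockE (k m : ℕ) (z : Fin k → ℝ) :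
    Matrix ((Fin k ⊕ Fin k) ⊕ (Unit ⊕ Fin m)) ((Fin k ⊕ Fin k) ⊕ (Unit ⊕ Fin m)) ℝ :=
  Matrix.fromBlocks
    (Matrix.fromBlocks (Matrix.diagonal z) (-(Matrix.diagonal z))
      (-(Matrix.diagonal z)) (Matrix.diagonal z)) 0 0 0

/-! The perturbed matrix `L + E` commutes with swapping the two `H`-blocks. Hence it maps the
antisymmetric vectors `(v, -v, 0, 0)` to themselves, acting there as `H + 2E_z`; in the coordinates
`(v₁ - v₂, v₂, w)` it is block lower triangular with diagonal blocks `H + 2E_z` and a matrix `M`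
that does not depend on `z`. So `χ(L + E) = χ(H + 2E_z) · χ(M)`, and `z = 0` gives
`χ(L) = χ(H) · χ(M)`; cancelling the common factor on the level of root multisets gives the claim. -/

open Matrix Polynomial

section SwapSymmetric

theorem reindex_sumAssoc_fromBlocks {α l m n : Type*}
    (A₁₁ : Matrix l l α) (A₁₂ : Matrix l m α) (A₂₁ : Matrix m l α) (A₂₂ : Matrix m m α)
    (B₁ : Matrix l n α) (B₂ : Matrix m n α) (C₁ : Matrix n l α) (C₂ : Matrix n m α)
    (D : Matrix n n α) :
    reindex (Equiv.sumAssoc l m n) (Equiv.sumAssoc l m n)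
        (fromBlocks (fromBlocks A₁₁ A₁₂ A₂₁ A₂₂) (fromRows B₁ B₂) (fromCols C₁ C₂) D) =
      fromBlocks A₁₁ (fromCols A₁₂ B₁) (fromRows A₂₁ C₁) (fromBlocks A₂₂ B₂ C₂ D) := by
  ext (i | i | i) (j | j | j) <;> rfl

variable {R ι κ : Type*} [CommRing R]

def swapSymmetricBlocks (P Q : Matrix ι ι R) (U : Matrix ι κ R) (V : Matrix κ ι R)
    (D : Matrix κ κ R) : Matrix ((ι ⊕ ι) ⊕ κ) ((ι ⊕ ι) ⊕ κ) R :=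
  fromBlocks (fromBlocks P Q Q P) (fromRows U U) (fromCols V V) D

variable [Fintype ι] [Fintype κ]
  (P Q : Matrix ι ι R) (U : Matrix ι κ R) (V : Matrix κ ι R) (D : Matrix κ κ R)

theorem swapSymmetricBlocks_mulVec_antisymmetric (v : ι → R) :
    swapSymmetricBlocks P Q U V D *ᵥ Sum.elim (Sum.elim v (-v)) 0 =
      Sum.elim (Sum.elim ((P - Q) *ᵥ v) (-((P - Q) *ᵥ v))) 0 := by
  simp only [swapSymmetricBlocks, fromBlocks_mulVec, fromCols_mulVec,
    Sum.elim_comp_inl, Sum.elim_comp_inr, mulVec_neg, mulVec_zero, sub_mulVec]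
  rw [neg_sub]
  simp only [sub_eq_add_neg, add_zero, add_neg_cancel]

variable [DecidableEq ι] [DecidableEq κ]

/-- In the coordinates `(v₁ - v₂, v₂, w)` the matrix becomes block lower triangular. -/
theorem conj_swapSymmetricBlocks :
    (fromBlocks (fromBlocks 1 (-1) 0 1) 0 0 1 : Matrix ((ι ⊕ ι) ⊕ κ) ((ι ⊕ ι) ⊕ κ) R) *
        swapSymmetricBlocks P Q U V D * fromBlocks (fromBlocks 1 1 0 1) 0 0 1 =
      fromBlocks (fromBlocks (P - Q) 0 Q (P + Q)) (fromRows 0 U) (fromCols V ((2 : R) • V)) D := by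
  simp only [swapSymmetricBlocks, fromBlocks_multiply, fromBlocks_mul_fromRows,
    fromCols_mul_fromBlocks, Matrix.mul_one, Matrix.one_mul, Matrix.zero_mul, Matrix.mul_zero,
    add_zero, zero_add, Matrix.neg_mul, two_smul]
  rw [add_neg_cancel, ← sub_eq_add_neg, ← sub_eq_add_neg, sub_add_sub_cancel, sub_self,
    add_comm Q P]

theorem charpoly_swapSymmetricBlocks :
    (swapSymmetricBlocks P Q U V D).charpoly =
      (P - Q).charpoly * (fromBlocks (P + Q) U ((2 : R) • V) D).charpoly := by
  set S : Matrix ((ι ⊕ ι) ⊕ κ) ((ι ⊕ ι) ⊕ κ) R := fromBlocks (fromBlocks 1 (-1) 0 1) 0 0 1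
  set S' : Matrix ((ι ⊕ ι) ⊕ κ) ((ι ⊕ ι) ⊕ κ) R := fromBlocks (fromBlocks 1 1 0 1) 0 0 1
  have hS : S' * S = 1 := by
    simp only [S, S', fromBlocks_multiply, Matrix.mul_one, Matrix.mul_neg,
      Matrix.mul_zero, Matrix.zero_mul, add_zero, zero_add, neg_add_cancel, neg_zero, fromBlocks_one]
  calc (swapSymmetricBlocks P Q U V D).charpoly
      = (S * swapSymmetricBlocks P Q U V D * S').charpoly := by
        rw [mul_assoc, charpoly_mul_comm, mul_assoc, hS, Matrix.mul_one]
    _ = _ := by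
        rw [conj_swapSymmetricBlocks, ← charpoly_reindex (Equiv.sumAssoc ι ι κ),
          reindex_sumAssoc_fromBlocks, fromCols_zero, charpoly_fromBlocks_zero₁₂]

end SwapSymmetric

section BlockL

variable (k m : ℕ) (H : Matrix (Fin k) (Fin k) ℝ) (y : Fin k → ℝ) (δ : ℝ) (t : Fin m → ℝ)
  (B : Matrix (Fin m) (Fin m) ℝ)

theorem blockE_zero : blockE k m 0 = 0 := by
  simp [blockE]

theorem blockL_add_blockE_eq_swapSymmetricBlocks (z : Fin k → ℝ) :
    blockL k m H y δ t B + blockE k m z =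
      swapSymmetricBlocks (H + diagonal z) (-diagonal z) (fromCols (-colVec y) 0)
        (fromRows (-colVec y)ᵀ 0) (blockL k m H y δ t B).toBlocks₂₂ := by
  simp [blockL, blockE, swapSymmetricBlocks, fromBlocks_add]

theorem charpoly_blockL_add_blockE (z : Fin k → ℝ) :
    (blockL k m H y δ t B + blockE k m z).charpoly =
      (H + (2 : ℝ) • diagonal z).charpoly *
        (fromBlocks H (fromCols (-colVec y) 0) ((2 : ℝ) • fromRows (-colVec y)ᵀ 0)
          (blockL k m H y δ t B).toBlocks₂₂).charpoly := by
  rw [blockL_add_blockE_eq_swapSymmetricBlocks, charpoly_swapSymmetricBlocks, sub_neg_eq_add,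
    add_neg_cancel_right, add_assoc, ← two_smul ℝ (diagonal z)]

theorem charpoly_blockL :
    (blockL k m H y δ t B).charpoly =
      H.charpoly * (fromBlocks H (fromCols (-colVec y) 0) ((2 : ℝ) • fromRows (-colVec y)ᵀ 0)
          (blockL k m H y δ t B).toBlocks₂₂).charpoly := by
  simpa [blockE_zero] using charpoly_blockL_add_blockE k m H y δ t B 0

end BlockL

theorem perturbed_spectrum_general (k m : ℕ) (H : Matrix (Fin k) (Fin k) ℝ)
    (y : Fin k → ℝ) (δ : ℝ) (t : Fin m → ℝ) (B : Matrix (Fin m) (Fin m) ℝ)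
    (z : Fin k → ℝ) :
    (∀ (v : Fin k → ℝ) (γ : ℝ), (H + (2 : ℝ) • Matrix.diagonal z).mulVec v = γ • v →
      (blockL k m H y δ t B + blockE k m z).mulVec
          (Sum.elim (Sum.elim v (fun i => -v i)) (fun _ => 0)) =
        γ • (Sum.elim (Sum.elim v (fun i => -v i)) (fun _ => 0))) ∧
    (blockL k m H y δ t B + blockE k m z).charpoly.roots =
      (blockL k m H y δ t B).charpoly.roots - H.charpoly.roots
        + (H + (2 : ℝ) • Matrix.diagonal z).charpoly.roots := by
  refine ⟨fun v γ hv => ?_, ?_⟩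
  · have hPQ : H + diagonal z - -diagonal z = H + (2 : ℝ) • diagonal z := by
      rw [two_smul, sub_neg_eq_add, add_assoc]
    rw [blockL_add_blockE_eq_swapSymmetricBlocks]
    refine (swapSymmetricBlocks_mulVec_antisymmetric _ _ _ _ _ v).trans ?_
    rw [hPQ, hv]
    ext ((i | i) | i) <;> simp
  · rw [charpoly_blockL_add_blockE, charpoly_blockL, roots_mul, roots_mul,
      add_tsub_cancel_left, add_comm]
    all_goals exact mul_ne_zero (charpoly_monic _).ne_zero (charpoly_monic _).ne_zero

/-- If `v` is an eigenvector of `H + 2E_z` with eigenvalue `γ`, then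
`w = (vᵀ, -vᵀ, 0, 0ᵀ)ᵀ` satisfies `L'w = γw`, where `L' = L + E`. Consequently, the
multiset of eigenvalues of `L'` equals `(spect(L) \ spect(H)) ∪ spect(H + 2E_z)`,
counting multiplicities. -/
theorem perturbed_spectrum (k m : ℕ) (hk : 0 < k) (H : Matrix (Fin k) (Fin k) ℝ)
    (y : Fin k → ℝ) (δ : ℝ) (t : Fin m → ℝ) (B : Matrix (Fin m) (Fin m) ℝ)
    (hH : H.IsSymm) (hB : B.IsSymm)
    (z : Fin k → ℝ) (hz : ∀ i, z i = 0 ∨ z i = 1) :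
    (∀ (v : Fin k → ℝ) (γ : ℝ), (H + (2 : ℝ) • Matrix.diagonal z).mulVec v = γ • v →
      (blockL k m H y δ t B + blockE k m z).mulVec
          (Sum.elim (Sum.elim v (fun i => -v i)) (fun _ => 0)) =
        γ • (Sum.elim (Sum.elim v (fun i => -v i)) (fun _ => 0))) ∧
    (blockL k m H y δ t B + blockE k m z).charpoly.roots =
      (blockL k m H y δ t B).charpoly.roots - H.charpoly.roots
        + (H + (2 : ℝ) • Matrix.diagonal z).charpoly.roots :=
  perturbed_spectrum_general k m H y δ t B z
end

section
/- Let G be a graph in W_{n,k} (two disjoint copies of a k-vertex labeled graph G* plus an (n-2k)-vertex rooted graph Ğ, where the root u is joined to the copies of vertex i in both copies of G* whenever y_i = 1), and let H = L(G*) + E_y. Then every eigenvalue of H is a Laplacian eigenvalue of G; in particular G has at least k Laplacian eigenvalues (with multiplicity) in spect(H). -/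
/-!
Swapping the two copies of `G*` is an automorphism of `G`, so `L(G)` preserves the space of
antisymmetric vectors `(x, -x, 0)`, and acts there as `H`: a vertex `i` of a copy has degree
`deg_{G*} i + y_i` and no neighbour in the other copy. In a basis adapted to this invariant
subspace `L(G)` is block triangular with `H` as a diagonal block, so `χ_H ∣ χ_{L(G)}`.
-/

open scoped Classical

/-- The base relation for a graph in `W_{n,k}`: two disjoint copies of the `k`-vertex
labeled graph `G*` together with the `(n-2k)`-vertex rooted graph `Ğ` (whose vertex set is
`Unit ⊕ Fin m` with root `Sum.inl ()`), where the root is joined to the copies of vertex `i`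
in both copies of `G*` whenever `y i = 1`. -/
def wRel {k m : ℕ} (Gstar : SimpleGraph (Fin k)) (Gb : SimpleGraph (Unit ⊕ Fin m))
    (y : Fin k → Bool) :
    ((Fin k ⊕ Fin k) ⊕ (Unit ⊕ Fin m)) → ((Fin k ⊕ Fin k) ⊕ (Unit ⊕ Fin m)) → Prop
  | Sum.inl (Sum.inl i), Sum.inl (Sum.inl j) => Gstar.Adj i j
  | Sum.inl (Sum.inr i), Sum.inl (Sum.inr j) => Gstar.Adj i j
  | Sum.inr a, Sum.inr b => Gb.Adj a b
  | Sum.inl (Sum.inl i), Sum.inr (Sum.inl _) => y i = true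
  | Sum.inl (Sum.inr i), Sum.inr (Sum.inl _) => y i = true
  | _, _ => False

/-- The graph `G = G(G*, Ğ, y) ∈ W_{n,k}` (here `n = 2k + 1 + m`). -/
def wGraph {k m : ℕ} (Gstar : SimpleGraph (Fin k)) (Gb : SimpleGraph (Unit ⊕ Fin m))
    (y : Fin k → Bool) : SimpleGraph ((Fin k ⊕ Fin k) ⊕ (Unit ⊕ Fin m)) :=
  SimpleGraph.fromRel (wRel Gstar Gb y)

open Matrix

namespace Matrix

variable {R : Type*} [CommRing R]

-- The columns of `fromRows 1 X` span a subspace invariant under `fromBlocks A B C D`,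
-- which acts on it as `H`.
theorem charpoly_fromBlocks_eq_mul_of_mul_eq {m n : Type*} [Fintype m] [DecidableEq m]
    [Fintype n] [DecidableEq n] {A H : Matrix m m R} {B : Matrix m n R} {C X : Matrix n m R}
    {D : Matrix n n R} (h₁ : A + B * X = H) (h₂ : C + D * X = X * H) :
    (fromBlocks A B C D).charpoly = H.charpoly * (D - X * B).charpoly := by
  set P : Matrix (m ⊕ n) (m ⊕ n) R := fromBlocks 1 0 X 1
  set P' : Matrix (m ⊕ n) (m ⊕ n) R := fromBlocks 1 0 (-X) 1
  have hPP' : P * P' = 1 := by simp [P, P', fromBlocks_multiply, fromBlocks_one]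
  have hconj : P' * (fromBlocks A B C D * P) = fromBlocks H B 0 (D - X * B) := by
    simp [P, P', fromBlocks_multiply, h₁, h₂, sub_eq_neg_add]
  rw [← charpoly_fromBlocks_zero₂₁, ← hconj, charpoly_mul_comm, Matrix.mul_assoc,
    hPP', Matrix.mul_one]

theorem charpoly_dvd_charpoly_of_swap_invariant {ι κ : Type*} [Fintype ι] [DecidableEq ι]
    [Fintype κ] [DecidableEq κ] (M : Matrix ((ι ⊕ ι) ⊕ κ) ((ι ⊕ ι) ⊕ κ) R)
    (H : Matrix ι ι R)
    (hM : ∀ v w, M ((Equiv.sumComm ι ι).sumCongr (Equiv.refl κ) v)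
      ((Equiv.sumComm ι ι).sumCongr (Equiv.refl κ) w) = M v w)
    (hH : ∀ i j, M (.inl (.inl i)) (.inl (.inl j)) - M (.inl (.inl i)) (.inl (.inr j)) = H i j) :
    H.charpoly ∣ M.charpoly := by
  set e := Equiv.sumAssoc ι ι κ
  set X : Matrix (ι ⊕ κ) ι R := of fun w j => if w = .inl j then -1 else 0
  set N := reindex e e M
  have h₁ : N.toBlocks₁₁ + N.toBlocks₁₂ * X = H := by
    ext i j
    simp [N, X, e, toBlocks₁₁, toBlocks₁₂, mul_apply, ← hH, sub_eq_add_neg]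
  have h₂ : N.toBlocks₂₁ + N.toBlocks₂₂ * X = X * H := by
    ext (l | r) j
    · have hbb := hM (.inl (.inl l)) (.inl (.inl j))
      have hba := hM (.inl (.inl l)) (.inl (.inr j))
      simp only [Equiv.sumCongr_apply, Sum.map_inl, Equiv.sumComm_apply, Sum.swap_inl,
        Sum.swap_inr] at hbb hba
      simp [N, X, e, toBlocks₂₁, toBlocks₂₂, mul_apply, ← hH, hbb, hba, sub_eq_add_neg]
    · have hr := hM (.inr r) (.inl (.inl j))
      simp only [Equiv.sumCongr_apply, Sum.map_inl, Sum.map_inr, Equiv.sumComm_apply,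
        Sum.swap_inl, Equiv.refl_apply] at hr
      simp [N, X, e, toBlocks₂₁, toBlocks₂₂, mul_apply, hr]
  rw [← charpoly_reindex e, ← fromBlocks_toBlocks (reindex e e M),
    charpoly_fromBlocks_eq_mul_of_mul_eq h₁ h₂]
  exact dvd_mul_right _ _

end Matrix

theorem SimpleGraph.Iso.lapMatrix_apply {V W : Type*} [Fintype V] [DecidableEq V] [Fintype W]
    [DecidableEq W] {G : SimpleGraph V} {G' : SimpleGraph W} [DecidableRel G.Adj]
    [DecidableRel G'.Adj] {R : Type*} [AddGroupWithOne R] (φ : G ≃g G') (v w : V) :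
    G'.lapMatrix R (φ v) (φ w) = G.lapMatrix R v w := by
  simp [lapMatrix, degMatrix, diagonal_apply, adjMatrix_apply, φ.map_adj_iff]

section wGraph

variable {k m : ℕ} (Gstar : SimpleGraph (Fin k)) (Gb : SimpleGraph (Unit ⊕ Fin m))
  (y : Fin k → Bool)

def wGraphSwapCopies : wGraph Gstar Gb y ≃g wGraph Gstar Gb y where
  toEquiv := (Equiv.sumComm _ _).sumCongr (Equiv.refl _)
  map_rel_iff' := by rintro ((i | i) | _ | a) ((j | j) | _ | b) <;> simp [wGraph, wRel]

theorem wGraph_adj_inl_inl_inl_inl (i j : Fin k) :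
    (wGraph Gstar Gb y).Adj (.inl (.inl i)) (.inl (.inl j)) ↔ Gstar.Adj i j := by
  simpa [wGraph, wRel, Gstar.adj_comm j i] using fun h : Gstar.Adj i j => h.ne

theorem wGraph_degree_inl_inl (i : Fin k) :
    (wGraph Gstar Gb y).degree (.inl (.inl i)) = Gstar.degree i + if y i then 1 else 0 := by
  have hG := (wGraph Gstar Gb y).degree_eq_sum_if_adj (R := ℕ) (.inl (.inl i))
  have hGstar := Gstar.degree_eq_sum_if_adj (R := ℕ) i
  simp only [Nat.cast_id, Fintype.sum_sum_type, wGraph_adj_inl_inl_inl_inl] at hG hGstar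
  rw [hG, hGstar]
  simp [wGraph, wRel]

variable {R : Type*} [CommRing R]

theorem wGraph_lapMatrix_inl_inl_inl_inl (i j : Fin k) :
    (wGraph Gstar Gb y).lapMatrix R (.inl (.inl i)) (.inl (.inl j)) =
      Gstar.lapMatrix R i j + diagonal (fun i => if y i then (1 : R) else 0) i j := by
  rcases eq_or_ne i j with rfl | hij <;>
    simp [SimpleGraph.lapMatrix, SimpleGraph.degMatrix, SimpleGraph.adjMatrix_apply,
      wGraph_degree_inl_inl, wGraph_adj_inl_inl_inl_inl, *]

theorem wGraph_lapMatrix_inl_inl_inl_inr (i j : Fin k) :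
    (wGraph Gstar Gb y).lapMatrix R (.inl (.inl i)) (.inl (.inr j)) = 0 := by
  simp only [SimpleGraph.lapMatrix, SimpleGraph.degMatrix, SimpleGraph.adjMatrix_apply,
    Matrix.sub_apply]
  simp [wGraph, wRel]

end wGraph

theorem wGraph_eigenvalues_general (k m : ℕ) (Gstar : SimpleGraph (Fin k))
    (Gb : SimpleGraph (Unit ⊕ Fin m)) (y : Fin k → Bool) :
    (Gstar.lapMatrix ℝ +
        Matrix.diagonal (fun i : Fin k => if y i then (1 : ℝ) else 0)).charpoly.roots ≤
      ((wGraph Gstar Gb y).lapMatrix ℝ).charpoly.roots := by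
  refine Polynomial.roots.le_of_dvd (Matrix.charpoly_monic _).ne_zero ?_
  refine charpoly_dvd_charpoly_of_swap_invariant _ _
    (wGraphSwapCopies Gstar Gb y).lapMatrix_apply fun i j => ?_
  rw [wGraph_lapMatrix_inl_inl_inl_inl, wGraph_lapMatrix_inl_inl_inl_inr, sub_zero,
    Matrix.add_apply]

/-- Every eigenvalue of `H = L(G*) + E_y` is a Laplacian eigenvalue of `G ∈ W_{n,k}`;
in particular `G` has at least `k` Laplacian eigenvalues (with multiplicity) in `spect(H)`. -/
theorem wGraph_eigenvalues (k m : ℕ) (hk : 0 < k) (Gstar : SimpleGraph (Fin k))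
    (Gb : SimpleGraph (Unit ⊕ Fin m)) (y : Fin k → Bool) :
    (Gstar.lapMatrix ℝ +
        Matrix.diagonal (fun i : Fin k => if y i then (1 : ℝ) else 0)).charpoly.roots ≤
      ((wGraph Gstar Gb y).lapMatrix ℝ).charpoly.roots :=
  wGraph_eigenvalues_general k m Gstar Gb y
end

section
/- Let G ∈ W_{n,k} with building blocks G*, Ğ and adjacency vector y, and let H = L(G*) + E_y. For any z ∈ {0,1}^k, let E_z(G) be obtained from G by adding an edge between the two copies of vertex i of G* whenever z_i = 1. Then the Laplacian spectrum of E_z(G) equals (Lspect(G) \ spect(H)) ∪ spect(H + 2E_z) as multisets; in particular G and E_z(G) share at least n-k Laplacian eigenvalues. -/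
open scoped Classical

/-- The graph `𝓔_z(G)`, obtained from `G ∈ W_{n,k}` by adding an edge between the two copies
of vertex `i` of `G*` whenever `z i = 1`. -/
def ezGraph {k m : ℕ} (Gstar : SimpleGraph (Fin k)) (Gb : SimpleGraph (Unit ⊕ Fin m))
    (y z : Fin k → Bool) : SimpleGraph ((Fin k ⊕ Fin k) ⊕ (Unit ⊕ Fin m)) :=
  wGraph Gstar Gb y ⊔ SimpleGraph.fromEdgeSet
    {e | ∃ i : Fin k, z i = true ∧ e = s(Sum.inl (Sum.inl i), Sum.inl (Sum.inr i))}

/-! The swap of the two copies of `G*` is an automorphism of `G` and of `𝓔_z(G)`, so both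
Laplacians have the block shape `[[A, D, B], [D, A, B], [B', B', C]]`. On the two copies, the
change of basis `(u, v) ↦ (u + v, u - v)` splits such a matrix into the symmetric part
`[[A + D, B], [2B', C]]` and the antisymmetric part `A - D`. For `G` we have `A = H` and
`D = 0`. The edges added by `𝓔_z` join twin vertices, so they add `E_z` to `A` and `-E_z` to `D`:
the symmetric part, with characteristic polynomial `p`, is unchanged, while the antisymmetric part
becomes `H + 2E_z`. Thus `χ(L(G)) = p · χ(H)` and `χ(L(𝓔_z G)) = p · χ(H + 2E_z)`, and `p` has
at least `n - k` roots because `L(G)` is symmetric, so `χ(L(G))` splits over `ℝ`. -/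

open Matrix Polynomial

namespace Matrix

variable {ι κ R : Type*}

def swapBlocks (A D : Matrix ι ι R) (B : Matrix ι κ R) (B' : Matrix κ ι R) (C : Matrix κ κ R) :
    Matrix ((ι ⊕ ι) ⊕ κ) ((ι ⊕ ι) ⊕ κ) R :=
  fromBlocks (fromBlocks A D D A) (fromRows B B) (fromCols B' B') C

theorem swapBlocks_add [Add R] (A D : Matrix ι ι R) (B : Matrix ι κ R) (B' : Matrix κ ι R)
    (C : Matrix κ κ R) (A₂ D₂ : Matrix ι ι R) (B₂ : Matrix ι κ R) (B₂' : Matrix κ ι R)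
    (C₂ : Matrix κ κ R) :
    swapBlocks A D B B' C + swapBlocks A₂ D₂ B₂ B₂' C₂ =
      swapBlocks (A + A₂) (D + D₂) (B + B₂) (B' + B₂') (C + C₂) := by
  ext ((i | i) | c) ((j | j) | d) <;> simp [swapBlocks]

theorem charpoly_swapBlocks [CommRing R] [Fintype ι] [Fintype κ] [DecidableEq ι] [DecidableEq κ]
    [Invertible (2 : R)] (A D : Matrix ι ι R) (B : Matrix ι κ R)
    (B' : Matrix κ ι R) (C : Matrix κ κ R) :
    (swapBlocks A D B B' C).charpoly =
      (fromBlocks (A + D) B ((2 : R) • B') C).charpoly * (A - D).charpoly := by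
  set U : Matrix (ι ⊕ ι) (ι ⊕ ι) R := fromBlocks 1 1 1 (-1)
  have hUU : U * U = (2 : R) • 1 := by
    simp [U, fromBlocks_multiply, two_smul, ← fromBlocks_one, fromBlocks_add]
  have hinv : (⅟(2 : R) • U) * U = 1 := by
    rw [smul_mul_assoc, hUU, smul_smul, invOf_mul_self, one_smul]
  have hinv' : U * (⅟(2 : R) • U) = 1 := by
    rw [mul_smul_comm, hUU, smul_smul, invOf_mul_self, one_smul]
  set T : Matrix ((ι ⊕ ι) ⊕ κ) ((ι ⊕ ι) ⊕ κ) R := fromBlocks U 0 0 1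
  set S : Matrix ((ι ⊕ ι) ⊕ κ) ((ι ⊕ ι) ⊕ κ) R := fromBlocks (⅟(2 : R) • U) 0 0 1
  have hTS : T * S = 1 := by simp [T, S, fromBlocks_multiply, hinv', ← fromBlocks_one]
  have hST : S * T = 1 := by simp [T, S, fromBlocks_multiply, hinv, ← fromBlocks_one]
  set N' :=
    fromBlocks (fromBlocks (A + D) 0 0 (A - D)) (fromRows B 0) (fromCols ((2 : R) • B') 0) C
  have hconj : swapBlocks A D B B' C * T = T * N' := by
    simp [N', T, U, swapBlocks, fromBlocks_multiply, fromCols_mul_fromBlocks,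
      fromBlocks_mul_fromRows, two_smul, sub_eq_add_neg, add_comm]
  have hsimilar : (swapBlocks A D B B' C).charpoly = N'.charpoly := by
    rw [← mul_one (swapBlocks A D B B' C), ← hTS, ← mul_assoc, charpoly_mul_comm,
      hconj, ← mul_assoc, hST, one_mul]
  let e : (ι ⊕ ι) ⊕ κ ≃ (ι ⊕ κ) ⊕ ι :=
    (Equiv.sumAssoc ι ι κ).trans
      ((Equiv.sumCongr (Equiv.refl ι) (Equiv.sumComm ι κ)).trans (Equiv.sumAssoc ι κ ι).symm)
  have hreindex : reindex e e N' =
      fromBlocks (fromBlocks (A + D) B ((2 : R) • B') C) 0 0 (A - D) := by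
    ext ((i | c) | i) ((j | d) | j) <;> rfl
  rw [hsimilar, ← charpoly_reindex e, hreindex, charpoly_fromBlocks_zero₁₂]

end Matrix

namespace Polynomial

variable {R : Type*} [CommRing R] [IsDomain R] {p q₁ q₂ : R[X]}

theorem roots_mul_eq_roots_mul_sub_add (h₁ : p * q₁ ≠ 0) (h₂ : p * q₂ ≠ 0) :
    (p * q₂).roots = (p * q₁).roots - q₁.roots + q₂.roots := by
  rw [roots_mul h₁, roots_mul h₂, add_tsub_cancel_right]

theorem card_roots_mul_sub_natDegree_le_card_inter (h₁ : p * q₁ ≠ 0) (h₂ : p * q₂ ≠ 0) :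
    Multiset.card (p * q₁).roots - q₁.natDegree ≤
      Multiset.card ((p * q₁).roots ∩ (p * q₂).roots) := by
  have hsub : p.roots ≤ (p * q₁).roots ∩ (p * q₂).roots := by
    rw [roots_mul h₁, roots_mul h₂]
    exact Multiset.le_inter (Multiset.le_add_right _ _) (Multiset.le_add_right _ _)
  have hcard : Multiset.card (p * q₁).roots = Multiset.card p.roots + Multiset.card q₁.roots := by
    rw [roots_mul h₁, Multiset.card_add]
  have := Multiset.card_le_card hsub
  have := card_roots' q₁
  omega

end Polynomial

namespace SimpleGraph

variable {V : Type*} (R : Type*) [Fintype V] [DecidableEq V]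

theorem lapMatrix_apply [AddCommGroupWithOne R] (G : SimpleGraph V) [DecidableRel G.Adj]
    (u v : V) :
    G.lapMatrix R u v =
      if u = v then ∑ w, if G.Adj u w then 1 else 0 else if G.Adj u v then -1 else 0 := by
  by_cases huv : u = v
  · subst huv; simp [lapMatrix, degMatrix, degree_eq_sum_if_adj]
  · by_cases hadj : G.Adj u v <;> simp [lapMatrix, degMatrix, huv, hadj]

section Disjoint

variable {G H : SimpleGraph V} [DecidableRel G.Adj] [DecidableRel H.Adj]
  [DecidableRel (G ⊔ H).Adj]

omit [Fintype V] [DecidableEq V] in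
theorem adjMatrix_sup_of_disjoint [AddMonoidWithOne R] (h : Disjoint G H) :
    (G ⊔ H).adjMatrix R = G.adjMatrix R + H.adjMatrix R := by
  ext u v
  by_cases hG : G.Adj u v
  · simp [hG, disjoint_left.mp h u v hG]
  · by_cases hH : H.Adj u v <;> simp [hG, hH]

theorem degree_sup_of_disjoint (h : Disjoint G H) (v : V) :
    (G ⊔ H).degree v = G.degree v + H.degree v := by
  simp only [← card_neighborFinset_eq_degree]
  rw [← Finset.card_union_of_disjoint (disjoint_neighborFinset_of_disjoint G H v h)]
  congr
  ext
  simp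

theorem lapMatrix_sup_of_disjoint [AddCommGroupWithOne R] (h : Disjoint G H) :
    (G ⊔ H).lapMatrix R = G.lapMatrix R + H.lapMatrix R := by
  simp only [lapMatrix, degMatrix, adjMatrix_sup_of_disjoint R h, degree_sup_of_disjoint h,
    Nat.cast_add, ← diagonal_add]
  abel

end Disjoint

end SimpleGraph

def twinMatching {k : ℕ} (V : Type*) (z : Fin k → Bool) : SimpleGraph ((Fin k ⊕ Fin k) ⊕ V) :=
  SimpleGraph.fromEdgeSet
    {e | ∃ i : Fin k, z i = true ∧ e = s(Sum.inl (Sum.inl i), Sum.inl (Sum.inr i))}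

section WGraph

variable {k m : ℕ} (Gstar : SimpleGraph (Fin k)) (Gb : SimpleGraph (Unit ⊕ Fin m))
  (y z : Fin k → Bool) (R : Type*) [Ring R]

theorem lapMatrix_twinMatching {V : Type*} [Fintype V] [DecidableEq V] :
    (twinMatching V z).lapMatrix R =
      swapBlocks (diagonal fun i => if z i then 1 else 0)
        (-diagonal fun i => if z i then 1 else 0) 0 0 0 := by
  ext ((i | i) | c) ((j | j) | d) <;> rw [SimpleGraph.lapMatrix_apply] <;>
    simp [-Finset.sum_boole, swapBlocks, twinMatching, diagonal_apply, ite_and]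
  all_goals split_ifs <;> simp_all

theorem exists_lapMatrix_wGraph_eq_swapBlocks :
    ∃ B B' C, (wGraph Gstar Gb y).lapMatrix R =
      swapBlocks (Gstar.lapMatrix R + diagonal fun i => if y i then 1 else 0) 0 B B' C := by
  set L := (wGraph Gstar Gb y).lapMatrix R
  have hdeg : ∀ i, (∑ x, if x = i then (0 : R) else if Gstar.Adj i x then 1 else 0) =
      ∑ x, if Gstar.Adj i x then 1 else 0 :=
    fun i => Finset.sum_congr rfl fun x _ => by by_cases h : x = i <;> simp [h]
  refine ⟨of fun i c => L (.inl (.inl i)) (.inr c), of fun c i => L (.inr c) (.inl (.inl i)),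
    of fun c d => L (.inr c) (.inr d), ?_⟩
  ext ((i | i) | u | c) ((j | j) | u' | d) <;>
    simp only [L, swapBlocks, fromBlocks_apply₁₁, fromBlocks_apply₁₂, fromBlocks_apply₂₁,
      fromBlocks_apply₂₂, fromRows_apply_inl, fromRows_apply_inr, fromCols_apply_inl,
      fromCols_apply_inr, of_apply, Matrix.add_apply, SimpleGraph.lapMatrix_apply] <;>
    simp [-Finset.sum_boole, Fintype.sum_sum_type, wGraph, wRel, diagonal_apply, ite_and,
      SimpleGraph.adj_comm, hdeg]
  all_goals split_ifs <;> simp_all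

theorem disjoint_wGraph_twinMatching : Disjoint (wGraph Gstar Gb y) (twinMatching _ z) := by
  refine SimpleGraph.disjoint_left.mpr ?_
  rintro u v huv ⟨⟨i, -, he⟩, -⟩
  rcases Sym2.eq_iff.mp he with ⟨rfl, rfl⟩ | ⟨rfl, rfl⟩ <;> simp [wGraph, wRel] at huv

theorem lapMatrix_ezGraph :
    (ezGraph Gstar Gb y z).lapMatrix R =
      (wGraph Gstar Gb y).lapMatrix R + (twinMatching _ z).lapMatrix R := by
  convert SimpleGraph.lapMatrix_sup_of_disjoint R (disjoint_wGraph_twinMatching Gstar Gb y z)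
    using 2 <;> rfl

end WGraph

theorem ezGraph_spectrum_general (k m : ℕ) (Gstar : SimpleGraph (Fin k))
    (Gb : SimpleGraph (Unit ⊕ Fin m)) (y z : Fin k → Bool) :
    ((ezGraph Gstar Gb y z).lapMatrix ℝ).charpoly.roots =
      ((wGraph Gstar Gb y).lapMatrix ℝ).charpoly.roots
        - (Gstar.lapMatrix ℝ +
            Matrix.diagonal (fun i : Fin k => if y i then (1 : ℝ) else 0)).charpoly.roots
        + (Gstar.lapMatrix ℝ +
            Matrix.diagonal (fun i : Fin k => if y i then (1 : ℝ) else 0) +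
            (2 : ℝ) • Matrix.diagonal
              (fun i : Fin k => if z i then (1 : ℝ) else 0)).charpoly.roots ∧
    (2 * k + 1 + m) - k ≤
      Multiset.card (((wGraph Gstar Gb y).lapMatrix ℝ).charpoly.roots
        ∩ ((ezGraph Gstar Gb y z).lapMatrix ℝ).charpoly.roots) := by
  obtain ⟨B, B', C, hW⟩ := exists_lapMatrix_wGraph_eq_swapBlocks Gstar Gb y ℝ
  set H := Gstar.lapMatrix ℝ + diagonal fun i => if y i then (1 : ℝ) else 0
  set E := diagonal fun i : Fin k => if z i then (1 : ℝ) else 0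
  set p := (fromBlocks H B ((2 : ℝ) • B') C).charpoly
  have hχW : ((wGraph Gstar Gb y).lapMatrix ℝ).charpoly = p * H.charpoly := by
    rw [hW, charpoly_swapBlocks, add_zero, sub_zero]
  have hχE : ((ezGraph Gstar Gb y z).lapMatrix ℝ).charpoly = p * (H + (2 : ℝ) • E).charpoly := by
    have hEz : (ezGraph Gstar Gb y z).lapMatrix ℝ = swapBlocks (H + E) (-E) B B' C := by
      rw [lapMatrix_ezGraph, hW, lapMatrix_twinMatching, swapBlocks_add, zero_add, add_zero,
        add_zero, add_zero]
    rw [hEz, charpoly_swapBlocks, add_neg_cancel_right, sub_neg_eq_add, add_assoc, ← two_smul ℝ E]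
  have hW₀ : p * H.charpoly ≠ 0 := hχW ▸ (charpoly_monic _).ne_zero
  have hE₀ : p * (H + (2 : ℝ) • E).charpoly ≠ 0 := hχE ▸ (charpoly_monic _).ne_zero
  refine ⟨by rw [hχW, hχE]; exact roots_mul_eq_roots_mul_sub_add hW₀ hE₀, ?_⟩
  calc (2 * k + 1 + m) - k
      = Multiset.card ((wGraph Gstar Gb y).lapMatrix ℝ).charpoly.roots - H.charpoly.natDegree := by
        rw [((wGraph Gstar Gb y).isHermitian_lapMatrix ℝ).roots_charpoly_eq_eigenvalues]
        simp only [Multiset.card_map, Finset.card_val, Finset.card_univ, Fintype.card_sum,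
          Fintype.card_fin, Fintype.card_unit, charpoly_natDegree_eq_dim]
        omega
    _ ≤ _ := by
        rw [hχW, hχE]
        exact card_roots_mul_sub_natDegree_le_card_inter hW₀ hE₀

/-- With `H = L(G*) + E_y`, the Laplacian spectrum of `𝓔_z(G)` equals
`(Lspect(G) \ spect(H)) ∪ spect(H + 2E_z)` as multisets; in particular `G` and `𝓔_z(G)`
share at least `n - k` Laplacian eigenvalues (here `n = 2k + 1 + m`). -/
theorem ezGraph_spectrum (k m : ℕ) (hk : 0 < k) (Gstar : SimpleGraph (Fin k))
    (Gb : SimpleGraph (Unit ⊕ Fin m)) (y z : Fin k → Bool) :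
    ((ezGraph Gstar Gb y z).lapMatrix ℝ).charpoly.roots =
      ((wGraph Gstar Gb y).lapMatrix ℝ).charpoly.roots
        - (Gstar.lapMatrix ℝ +
            Matrix.diagonal (fun i : Fin k => if y i then (1 : ℝ) else 0)).charpoly.roots
        + (Gstar.lapMatrix ℝ +
            Matrix.diagonal (fun i : Fin k => if y i then (1 : ℝ) else 0) +
            (2 : ℝ) • Matrix.diagonal
              (fun i : Fin k => if z i then (1 : ℝ) else 0)).charpoly.roots ∧
    (2 * k + 1 + m) - k ≤
      Multiset.card (((wGraph Gstar Gb y).lapMatrix ℝ).charpoly.roots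
        ∩ ((ezGraph Gstar Gb y z).lapMatrix ℝ).charpoly.roots) :=
  ezGraph_spectrum_general k m Gstar Gb y z
end
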